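/- Let g : [0,∞) → ℝ be differentiable and nonnegative with g' ≥ −(1/2)a(t)·g − (1/2)a(t) where a(t) = L₀² e^{−2βt} for constants L₀, β > 0. If g(0) > (L₀²/(4β)) · exp(L₀²/(4β)), then g(t) > 0 for all t ≥ 0. -/

import Mathlib

/-!
The inequality says `(g + 1)' ≥ -a (g + 1)` with `a t = (1/2) L₀² e^{-2βt}`, so the integrating
factor `exp (∫₀ᵗ a)` makes `exp (∫₀ᵗ a) (g + 1)` nondecreasing (a Grönwall lower bound). As
`∫₀^∞ a = L₀²/(4β) =: C`, this gives `g t + 1 ≥ e^{-C} (g 0 + 1)`, which exceeds `1` because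
`g 0 > C e^C ≥ e^C - 1`.
-/

open Real Set

theorem monotoneOn_exp_mul_of_neg_mul_le_deriv {s : Set ℝ} (hs : Convex ℝ s)
    {f f' a A : ℝ → ℝ} (hf : ∀ t ∈ s, HasDerivAt f (f' t) t)
    (hA : ∀ t ∈ s, HasDerivAt A (a t) t) (hineq : ∀ t ∈ s, -a t * f t ≤ f' t) :
    MonotoneOn (fun t => exp (A t) * f t) s := by
  have hderiv : ∀ t ∈ s,
      HasDerivAt (fun t => exp (A t) * f t) (exp (A t) * a t * f t + exp (A t) * f' t) t :=
    fun t ht => ((hA t ht).exp).mul (hf t ht)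
  refine monotoneOn_of_hasDerivWithinAt_nonneg hs
    (fun t ht => (hderiv t ht).continuousAt.continuousWithinAt)
    (fun t ht => (hderiv t (interior_subset ht)).hasDerivWithinAt) fun t ht => ?_
  have hnonneg : 0 ≤ exp (A t) * (f' t + a t * f t) :=
    mul_nonneg (exp_pos _).le (by linarith [hineq t (interior_subset ht)])
  linarith

theorem exp_neg_mul_le_of_neg_mul_le_deriv {s : Set ℝ} (hs : Convex ℝ s)
    {f f' a A : ℝ → ℝ} (hf : ∀ t ∈ s, HasDerivAt f (f' t) t)
    (hA : ∀ t ∈ s, HasDerivAt A (a t) t) (hineq : ∀ t ∈ s, -a t * f t ≤ f' t)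
    {t₀ t M : ℝ} (ht₀ : t₀ ∈ s) (ht : t ∈ s) (hle : t₀ ≤ t) (hf₀ : 0 ≤ f t₀)
    (hM : A t - A t₀ ≤ M) : exp (-M) * f t₀ ≤ f t := by
  have hmono : exp (A t₀) * f t₀ ≤ exp (A t) * f t :=
    monotoneOn_exp_mul_of_neg_mul_le_deriv hs hf hA hineq ht₀ ht hle
  calc exp (-M) * f t₀ ≤ exp (A t₀ - A t) * f t₀ := by gcongr; linarith
    _ = exp (-A t) * (exp (A t₀) * f t₀) := by rw [sub_eq_neg_add, exp_add]; ring
    _ ≤ exp (-A t) * (exp (A t) * f t) := by gcongr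
    _ = f t := by rw [← mul_assoc, ← exp_add, neg_add_cancel, exp_zero, one_mul]

theorem hasDerivAt_mul_one_sub_exp_neg_mul (c k t : ℝ) :
    HasDerivAt (fun t => c * (1 - exp (-k * t))) (c * k * exp (-k * t)) t := by
  have hlin : HasDerivAt (fun t => -k * t) (-k) t := by
    simpa using (hasDerivAt_id t).const_mul (-k)
  have hsub : HasDerivAt (fun t => 1 - exp (-k * t)) (0 - exp (-k * t) * -k) t :=
    (hasDerivAt_const t 1).sub hlin.exp
  exact (hsub.const_mul c).congr_deriv (by ring)

theorem exp_sub_one_le_mul_exp (x : ℝ) : exp x - 1 ≤ x * exp x := by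
  have h := mul_le_mul_of_nonneg_right (one_sub_le_exp_neg x) (exp_pos x).le
  rw [← exp_add, neg_add_cancel, exp_zero, sub_mul, one_mul] at h
  linarith

theorem chord_arc_positivity_general
    (L₀ β : ℝ) (hβ : 0 < β)
    (g g' : ℝ → ℝ)
    (hg : ∀ t, HasDerivAt g (g' t) t)
    (hineq : ∀ t ≥ 0,
      -(1 / 2) * (L₀ ^ 2 * Real.exp (-2 * β * t)) * g t
        - (1 / 2) * (L₀ ^ 2 * Real.exp (-2 * β * t)) ≤ g' t)
    (h0 : g 0 > (L₀ ^ 2 / (4 * β)) * Real.exp (L₀ ^ 2 / (4 * β))) :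
    ∀ t ≥ 0, 0 < g t := by
  intro t ht
  set C := L₀ ^ 2 / (4 * β)
  have hC : 0 ≤ C := by positivity
  have hA : ∀ t, HasDerivAt (fun t => C * (1 - exp (-(2 * β) * t)))
      ((1 / 2) * (L₀ ^ 2 * exp (-2 * β * t))) t := by
    intro t
    convert hasDerivAt_mul_one_sub_exp_neg_mul C (2 * β) t using 1
    simp only [C, neg_mul]
    field_simp
    ring
  have hgronwall : exp (-C) * (g 0 + 1) ≤ g t + 1 := by
    refine exp_neg_mul_le_of_neg_mul_le_deriv (convex_Ici 0) (fun t _ => (hg t).add_const 1)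
      (fun t _ => hA t) (fun t ht => by linear_combination hineq t ht) self_mem_Ici ht ht
      (by linarith [mul_nonneg hC (exp_pos C).le]) ?_
    have : 0 < exp (-(2 * β) * t) := exp_pos _
    simp only [mul_zero, exp_zero, sub_self, sub_zero]
    nlinarith
  have hexp : 1 < exp (-C) * (g 0 + 1) := by
    rw [exp_neg, inv_mul_eq_div, one_lt_div (exp_pos C)]
    linarith [exp_sub_one_le_mul_exp C]
  linarith

/-- ODE comparison behind embeddedness preservation: if `g ≥ 0` is differentiable
with `g' ≥ −(1/2)a(t)g − (1/2)a(t)`, `a(t) = L₀²e^{−2βt}` (`L₀, β > 0`), and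
`g(0) > (L₀²/(4β))·exp(L₀²/(4β))`, then `g(t) > 0` for all `t ≥ 0`. -/
theorem chord_arc_positivity
    (L₀ β : ℝ) (hL₀ : 0 < L₀) (hβ : 0 < β)
    (g g' : ℝ → ℝ)
    (hg : ∀ t, HasDerivAt g (g' t) t)
    (hnn : ∀ t ≥ 0, 0 ≤ g t)
    (hineq : ∀ t ≥ 0,
      -(1 / 2) * (L₀ ^ 2 * Real.exp (-2 * β * t)) * g t
        - (1 / 2) * (L₀ ^ 2 * Real.exp (-2 * β * t)) ≤ g' t)
    (h0 : g 0 > (L₀ ^ 2 / (4 * β)) * Real.exp (L₀ ^ 2 / (4 * β))) :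
    ∀ t ≥ 0, 0 < g t :=
  chord_arc_positivity_general L₀ β hβ g g' hg hineq h0
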